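/- arXiv:2401.00666 — 4 statements merged into one kernel-verified Lean document; each statement's English description precedes it below -/
import Mathlib

section
/- For finite graphs G and H, (G □ H)_δ = G_δ □ H_δ if and only if for all vertices u = (u₁,u₂) and v = (v₁,v₂) of G □ H with u₁ ≠ v₁ and u₂ ≠ v₂, the degrees of u and v in G □ H are distinct. -/
open scoped Classical
open SimpleGraph

/-- The δ-complement of a graph: `u v` are adjacent iff they are distinct and
either they have equal degrees and are non-adjacent in `G`, or they have
different degrees and are adjacent in `G`. -/
def deltaComp {V : Type*} [Fintype V] (G : SimpleGraph V) : SimpleGraph V where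
  Adj u v := u ≠ v ∧ ((G.degree u = G.degree v ∧ ¬ G.Adj u v) ∨
    (G.degree u ≠ G.degree v ∧ G.Adj u v))
  symm := ⟨by
    intro u v h
    refine ⟨h.1.symm, ?_⟩
    rcases h.2 with ⟨hd, ha⟩ | ⟨hd, ha⟩
    · exact Or.inl ⟨hd.symm, fun hh => ha hh.symm⟩
    · exact Or.inr ⟨fun hh => hd hh.symm, ha.symm⟩⟩
  loopless := ⟨fun v h => h.1 rfl⟩

/-- The δ-chromatic number: chromatic number of the δ-complement. -/
noncomputable def deltaChrom {V : Type*} [Fintype V] (G : SimpleGraph V) : ℕ∞ :=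
  (deltaComp G).chromaticNumber

/-
In `G □ H` the degree of `(a, b)` is `deg a + deg b`, so two vertices sharing a coordinate have
equal degrees in `G □ H` iff their other coordinates have equal degrees in the factor; hence
`(G □ H)_δ` and `G_δ □ H_δ` agree on such pairs. Two vertices differing in both coordinates are
never adjacent in `G □ H` nor in `G_δ □ H_δ`, and they are adjacent in `(G □ H)_δ` exactly
when their degrees coincide.
-/

namespace SimpleGraph

variable {V W : Type*} {G : SimpleGraph V} {H : SimpleGraph W}

theorem not_boxProd_adj_of_ne_of_ne {u v : V × W} (h₁ : u.1 ≠ v.1) (h₂ : u.2 ≠ v.2) :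
    ¬ (G □ H).Adj u v := by
  rintro (⟨-, h⟩ | ⟨-, h⟩)
  exacts [h₂ h, h₁ h]

variable [Fintype V] [Fintype W]

theorem deltaComp_adj {u v : V} :
    (deltaComp G).Adj u v ↔ u ≠ v ∧ ((G.degree u = G.degree v ∧ ¬ G.Adj u v) ∨
      (G.degree u ≠ G.degree v ∧ G.Adj u v)) :=
  Iff.rfl

theorem deltaComp_boxProd_adj_left {a₁ a₂ : V} {b : W} :
    (deltaComp (G □ H)).Adj (a₁, b) (a₂, b) ↔ (deltaComp G).Adj a₁ a₂ := by
  simp only [deltaComp_adj, degree_boxProd, Nat.add_right_cancel_iff, boxProd_adj_left, ne_eq,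
    Prod.mk.injEq, and_true]

theorem deltaComp_boxProd_adj_right {a : V} {b₁ b₂ : W} :
    (deltaComp (G □ H)).Adj (a, b₁) (a, b₂) ↔ (deltaComp H).Adj b₁ b₂ := by
  simp only [deltaComp_adj, degree_boxProd, Nat.add_left_cancel_iff, boxProd_adj_right, ne_eq,
    Prod.mk.injEq, true_and]

theorem deltaComp_boxProd_adj_of_ne_of_ne {u v : V × W} (h₁ : u.1 ≠ v.1) (h₂ : u.2 ≠ v.2) :
    (deltaComp (G □ H)).Adj u v ↔ (G □ H).degree u = (G □ H).degree v := by
  have hne : u ≠ v := fun h => h₁ (congrArg Prod.fst h)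
  -- `deltaComp` and the right-hand side compute `degree` with different `Fintype` instances;
  -- `degree_boxProd` rewrites both to the same sum.
  simp only [deltaComp_adj, not_boxProd_adj_of_ne_of_ne h₁ h₂, hne, not_false_eq_true,
    and_true, and_false, or_false, ne_eq, true_and, degree_boxProd]

end SimpleGraph

/-- `(G □ H)_δ = G_δ □ H_δ` iff any two vertices differing in both coordinates
have distinct degrees in `G □ H`. -/
theorem deltaComp_boxProd_eq_iff {V W : Type*} [Fintype V] [Fintype W]
    (G : SimpleGraph V) (H : SimpleGraph W) :
    deltaComp (G □ H) = (deltaComp G □ deltaComp H) ↔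
      ∀ u v : V × W, u.1 ≠ v.1 → u.2 ≠ v.2 →
        (G □ H).degree u ≠ (G □ H).degree v := by
  constructor
  · intro heq u v h₁ h₂ hdeg
    have hadj := (deltaComp_boxProd_adj_of_ne_of_ne h₁ h₂).2 hdeg
    rw [heq] at hadj
    exact not_boxProd_adj_of_ne_of_ne h₁ h₂ hadj
  · intro hdeg
    ext ⟨a₁, b₁⟩ ⟨a₂, b₂⟩
    by_cases h₁ : a₁ = a₂
    · subst h₁
      rw [deltaComp_boxProd_adj_right, boxProd_adj_right]
    by_cases h₂ : b₁ = b₂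
    · subst h₂
      rw [deltaComp_boxProd_adj_left, boxProd_adj_left]
    rw [deltaComp_boxProd_adj_of_ne_of_ne h₁ h₂]
    exact iff_of_false (hdeg _ _ h₁ h₂) (not_boxProd_adj_of_ne_of_ne h₁ h₂)
end

section
/- For n ≥ 5, the δ-chromatic number of C_n □ P₃ equals 2⌈n/2⌉. -/
/-!
Write `Gᵟ` for the δ-complement. If `G` is regular, the degree of `(a, j)` in `G □ P₃` depends
only on `j`, so `Gᵟ` restricted to a layer `G × {j}` is a copy of `Gᶜ`, the two outer layers
(equal degree, no edges between them) are completely joined, and the middle layer meets the outer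
ones only in the vertical edges `(a, 1) (a, j)`. Hence a colouring of `Gᵟ` contains two colourings
of `Gᶜ` with disjoint palettes, while a colouring `c` of `Gᶜ` with `k ≥ 2` colours yields one of
`Gᵟ` with `2k` colours: `c` and a second copy of `c` on the outer layers, `c + 1 (mod k)` in
the middle. So `χ_δ(G □ P₃) = 2 χ(Gᶜ)`. For `G = C_n`, `n ≥ 4`, colour classes of `C_nᶜ` are
cliques of the triangle-free `C_n`, hence of size at most two, and `i ↦ ⌊i / 2⌋` attains this,
so `χ(C_nᶜ) = ⌈n / 2⌉`.
-/

open scoped Classical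
open SimpleGraph

namespace SimpleGraph

open Finset

variable {V W : Type*}

section deltaComp

variable [Fintype V] {G : SimpleGraph V} [G.LocallyFinite] {u v : V}

theorem deltaComp_adj_iff :
    (deltaComp G).Adj u v ↔ u ≠ v ∧ (G.degree u = G.degree v ↔ ¬G.Adj u v) := by
  -- `deltaComp` counts neighbours with its own `Fintype` instances; align them with ours.
  obtain rfl := Subsingleton.elim ‹G.LocallyFinite› fun _ => Subtype.fintype _
  by_cases G.Adj u v <;> simp [deltaComp, *]

theorem deltaComp_adj_of_degree_eq (h : G.degree u = G.degree v) :
    (deltaComp G).Adj u v ↔ Gᶜ.Adj u v := by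
  simp [deltaComp_adj_iff, h, compl_adj]

theorem deltaComp_adj_of_degree_ne (h : G.degree u ≠ G.degree v) :
    (deltaComp G).Adj u v ↔ G.Adj u v := by
  simp only [deltaComp_adj_iff, h, false_iff, not_not, and_iff_right_iff_imp]
  exact Adj.ne

end deltaComp

section boxProd

variable {G : SimpleGraph V} {H : SimpleGraph W} [G.LocallyFinite] [H.LocallyFinite] {d : ℕ}

theorem degree_boxProd_eq_iff (hG : G.IsRegularOfDegree d) {a a' : V} {b b' : W} :
    (G □ H).degree (a, b) = (G □ H).degree (a', b') ↔ H.degree b = H.degree b' := by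
  simp [degree_boxProd, hG.degree_eq]

variable [Fintype V] [Fintype W]

theorem deltaComp_boxProd_adj_same_layer (hG : G.IsRegularOfDegree d) {a a' : V} (b : W) :
    (deltaComp (G □ H)).Adj (a, b) (a', b) ↔ Gᶜ.Adj a a' := by
  rw [deltaComp_adj_of_degree_eq ((degree_boxProd_eq_iff hG).2 rfl)]
  simp [compl_adj, boxProd_adj]

theorem deltaComp_boxProd_adj_of_degree_eq (hG : G.IsRegularOfDegree d) {b b' : W}
    (hdeg : H.degree b = H.degree b') (hne : b ≠ b') (hb : ¬H.Adj b b') (a a' : V) :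
    (deltaComp (G □ H)).Adj (a, b) (a', b') := by
  rw [deltaComp_adj_of_degree_eq ((degree_boxProd_eq_iff hG).2 hdeg)]
  simp [compl_adj, boxProd_adj, hne, hb]

theorem eq_of_deltaComp_boxProd_adj_of_degree_ne (hG : G.IsRegularOfDegree d)
    {a a' : V} {b b' : W} (hdeg : H.degree b ≠ H.degree b')
    (h : (deltaComp (G □ H)).Adj (a, b) (a', b')) : a = a' := by
  rw [deltaComp_adj_of_degree_ne (mt (degree_boxProd_eq_iff hG).1 hdeg), boxProd_adj] at h
  rcases h with ⟨-, rfl⟩ | ⟨-, rfl⟩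
  · exact absurd rfl hdeg
  · rfl

end boxProd

theorem degree_pathGraph_three [(pathGraph 3).LocallyFinite] (j : Fin 3) :
    (pathGraph 3).degree j = if j = 1 then 2 else 1 := by
  rw [← card_neighborSet_eq_degree, Fintype.card_of_subtype
    ({k : Fin 3 | (j : ℕ) + 1 = k ∨ (k : ℕ) + 1 = j} : Finset (Fin 3)) (by simp [pathGraph_adj])]
  fin_cases j <;> rfl

theorem Coloring.colorable_card_image {α : Type*} [Fintype V] [DecidableEq α] {G : SimpleGraph V}
    (C : G.Coloring α) : G.Colorable #(univ.image C) := by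
  simpa using (Coloring.mk (fun v => (⟨C v, mem_image_of_mem C (mem_univ v)⟩ : univ.image C))
    fun h heq => C.valid h (congrArg Subtype.val heq)).colorable

section pathGraph_three

variable [Fintype V] {G : SimpleGraph V} [G.LocallyFinite] {d : ℕ}

theorem colorable_compl_of_colorable_deltaComp_boxProd_pathGraph_three
    (hG : G.IsRegularOfDegree d) {t : ℕ} (h : (deltaComp (G □ pathGraph 3)).Colorable t) :
    Gᶜ.Colorable (t / 2) := by
  obtain ⟨C⟩ := h
  let layer (j : Fin 3) : Gᶜ.Coloring (Fin t) :=
    C.comp ⟨fun a => (a, j), (deltaComp_boxProd_adj_same_layer hG j).2⟩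
  have hdisj : Disjoint (univ.image (layer 0)) (univ.image (layer 2)) := by
    simp only [Finset.disjoint_left, mem_image, mem_univ, true_and, forall_exists_index]
    rintro _ a rfl ⟨a', h⟩
    refine C.valid (deltaComp_boxProd_adj_of_degree_eq hG ?_ (by decide) ?_ a a') h.symm
    · simp [degree_pathGraph_three]
    · simp [pathGraph_adj]
  have hcard : #(univ.image (layer 0)) + #(univ.image (layer 2)) ≤ t := by
    simpa [card_union_of_disjoint hdisj] using
      card_le_univ (univ.image (layer 0) ∪ univ.image (layer 2))
  by_cases h0 : #(univ.image (layer 0)) ≤ t / 2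
  · exact (layer 0).colorable_card_image.mono h0
  · exact (layer 2).colorable_card_image.mono (by omega)

theorem colorable_deltaComp_boxProd_pathGraph_three (hG : G.IsRegularOfDegree d) {k : ℕ}
    (hk : 2 ≤ k) (h : Gᶜ.Colorable k) : (deltaComp (G □ pathGraph 3)).Colorable (2 * k) := by
  obtain ⟨c⟩ := h
  obtain ⟨k, rfl⟩ : ∃ k', k = k' + 2 := ⟨k - 2, by omega⟩
  have hshift (x : Fin (k + 2)) : x + 1 ≠ x := by simp
  have same (j : Fin 3) {a a' : V} (h : (deltaComp (G □ pathGraph 3)).Adj (a, j) (a', j)) :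
      c a ≠ c a' :=
    c.valid ((deltaComp_boxProd_adj_same_layer hG j).1 h)
  have cross {a a' : V} (h : (deltaComp (G □ pathGraph 3)).Adj (a, 0) (a', 1)) : a = a' :=
    eq_of_deltaComp_boxProd_adj_of_degree_ne hG (by simp [degree_pathGraph_three]) h
  let C : (deltaComp (G □ pathGraph 3)).Coloring (Fin (k + 2) × Fin 2) :=
    Coloring.mk (fun v => ![(c v.1, 0), (c v.1 + 1, 0), (c v.1, 1)] v.2) ?_
  · simpa [mul_comm] using C.colorable
  rintro ⟨a, j⟩ ⟨a', j'⟩ hadj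
  fin_cases j <;> fin_cases j' <;> simp
  · exact same 0 hadj
  · exact cross hadj ▸ (hshift _).symm
  · exact cross hadj.symm ▸ hshift _
  · exact same 1 hadj
  · exact same 2 hadj

end pathGraph_three

theorem IsClique.card_le_of_cliqueFree {G : SimpleGraph V} {r : ℕ} (hG : G.CliqueFree (r + 1))
    {s : Finset V} (hs : G.IsClique (s : Set V)) : #s ≤ r := by
  by_contra! h
  obtain ⟨t, hts, ht⟩ := exists_subset_card_eq h
  exact hG t ⟨hs.subset (by simpa using hts), ht⟩

theorem card_le_mul_of_cliqueFree_of_colorable_compl [Fintype V] {G : SimpleGraph V} {r k : ℕ}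
    (hG : G.CliqueFree (r + 1)) (h : Gᶜ.Colorable k) : Fintype.card V ≤ r * k := by
  obtain ⟨C⟩ := h
  have hfiber (c : Fin k) : G.IsClique ({a | C a = c} : Finset V) := by
    intro x hx y hy hxy
    by_contra hnadj
    exact C.valid ⟨hxy, hnadj⟩ ((mem_filter.1 hx).2.trans (mem_filter.1 hy).2.symm)
  calc Fintype.card V ≤ r * #(univ.image C) :=
        card_le_mul_card_image univ r fun c _ => (hfiber c).card_le_of_cliqueFree hG
    _ ≤ r * k := by
        gcongr
        simpa using card_le_univ (univ.image C)

theorem cycleGraph_adj_iff_val {n : ℕ} (hn : 2 ≤ n) {a b : Fin n} :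
    (cycleGraph n).Adj a b ↔ (a : ℕ) + 1 = b ∨ (b : ℕ) + 1 = a ∨
      (a : ℕ) + 1 = n ∧ (b : ℕ) = 0 ∨ (b : ℕ) + 1 = n ∧ (a : ℕ) = 0 := by
  obtain ⟨n, rfl⟩ : ∃ m, n = m + 2 := ⟨n - 2, by omega⟩
  rw [cycleGraph_adj, sub_eq_iff_eq_add', sub_eq_iff_eq_add', Fin.ext_iff, Fin.ext_iff,
    Fin.val_add_one, Fin.val_add_one]
  have := a.isLt
  have := b.isLt
  split_ifs <;> simp only [Fin.ext_iff, Fin.val_last] at * <;> omega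

theorem cliqueFree_three_cycleGraph {n : ℕ} (hn : 4 ≤ n) : (cycleGraph n).CliqueFree 3 := by
  intro s hs
  obtain ⟨a, b, c, hab, hac, hbc, -⟩ := is3Clique_iff.1 hs
  rw [cycleGraph_adj_iff_val (by omega)] at hab hac hbc
  omega

theorem colorable_compl_cycleGraph (n : ℕ) : (cycleGraph n)ᶜ.Colorable ((n + 1) / 2) := by
  refine ⟨Coloring.mk (fun a => ⟨a / 2, by omega⟩) fun {a b} hab heq => hab.2 ?_⟩
  have hne : (a : ℕ) ≠ b := Fin.val_ne_of_ne hab.1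
  have heq : (a : ℕ) / 2 = b / 2 := Fin.mk.inj heq
  rw [cycleGraph_adj_iff_val (by omega)]
  omega

theorem isRegularOfDegree_cycleGraph {n : ℕ} (hn : 3 ≤ n) :
    (cycleGraph n).IsRegularOfDegree 2 := by
  obtain ⟨n, rfl⟩ : ∃ m, n = m + 3 := ⟨n - 3, by omega⟩
  exact fun _ => cycleGraph_degree_three_le

end SimpleGraph

/-- For `n ≥ 5`, `χ_δ(C_n □ P₃) = 2⌈n/2⌉`. -/
theorem deltaChrom_cycle_boxProd_path_three (n : ℕ) (hn : 5 ≤ n) :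
    deltaChrom (cycleGraph n □ pathGraph 3) = ((2 * ((n + 1) / 2) : ℕ) : ℕ∞) := by
  have hreg := isRegularOfDegree_cycleGraph (n := n) (by omega)
  refine le_antisymm ?_ (le_chromaticNumber_iff_colorable.2 fun t ht => ?_)
  · exact (colorable_deltaComp_boxProd_pathGraph_three hreg (by omega)
      (colorable_compl_cycleGraph n)).chromaticNumber_le
  · have := card_le_mul_of_cliqueFree_of_colorable_compl (cliqueFree_three_cycleGraph (by omega))
      (colorable_compl_of_colorable_deltaComp_boxProd_pathGraph_three hreg ht)
    rw [Fintype.card_fin] at this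
    exact_mod_cast (by omega : 2 * ((n + 1) / 2) ≤ t)
end

section
/- For m, n ≥ 3, the δ-chromatic number of the Cartesian product of stars S_{1,m} □ S_{1,n} equals mn. -/
open scoped Classical
open SimpleGraph

/-- The star `S_{1,m}` with one center and `m` leaves. -/
def starGraphS (m : ℕ) : SimpleGraph (Fin 1 ⊕ Fin m) := completeBipartiteGraph (Fin 1) (Fin m)


/-! In `G = S_{1,m} □ S_{1,n}` the `mn` pairs of leaves all have degree `2` and are pairwise
non-adjacent, so they form a clique of the δ-complement. Every other vertex has degree at least
`3`, so a pair of leaves `(i, j)` is joined in the δ-complement to another vertex only along an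
edge of `G`, namely to `(c, j)` and `(i, c)` for the centers `c`. Coloring `(i, j)` by itself, it
therefore suffices to give the remaining `1 + m + n` vertices distinct colors, that of `(c, j)`
outside column `j` and that of `(i, c)` outside row `i`. -/

section DeltaComp

variable {V α : Type*} [Fintype V] {G : SimpleGraph V}

theorem isClique_deltaComp_of_isIndepSet {s : Set V} (hs : G.IsIndepSet s)
    (hdeg : ∀ u ∈ s, ∀ v ∈ s, G.degree u = G.degree v) : (deltaComp G).IsClique s :=
  fun u hu v hv huv => ⟨huv, Or.inl ⟨hdeg u hu v hv, hs hu hv huv⟩⟩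

theorem ne_of_deltaComp_adj {S : Set V} (hdeg : ∀ u ∈ S, ∀ v ∉ S, G.degree u ≠ G.degree v)
    {c : V → α} (hS : S.InjOn c) (hSc : Sᶜ.InjOn c)
    (hG : ∀ u ∈ S, ∀ v ∉ S, G.Adj u v → c u ≠ c v) {u v : V} (huv : (deltaComp G).Adj u v) :
    c u ≠ c v := by
  have cross : ∀ {u v}, u ∈ S → v ∉ S → (deltaComp G).Adj u v → c u ≠ c v := by
    rintro u v hu hv ⟨-, ⟨hd, -⟩ | ⟨-, hadj⟩⟩
    · exact absurd hd (hdeg u hu v hv)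
    · exact hG u hu v hv hadj
  by_cases hu : u ∈ S <;> by_cases hv : v ∈ S
  · exact fun h => huv.1 (hS hu hv h)
  · exact cross hu hv huv
  · exact (cross hv hu huv.symm).symm
  · exact fun h => huv.1 (hSc hu hv h)

end DeltaComp

section Star

variable {m n : ℕ}

theorem starGraphS_degree_inl (a : Fin 1) : (starGraphS m).degree (.inl a) = m := by
  rw [← card_neighborFinset_eq_degree]
  have : (starGraphS m).neighborFinset (.inl a) = Finset.univ.map .inr := by
    ext (_ | _) <;> rw [mem_neighborFinset] <;> simp [starGraphS, Fin.fin_one_eq_zero]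
  simp [this]

theorem starGraphS_degree_inr (i : Fin m) : (starGraphS m).degree (.inr i) = 1 := by
  rw [← card_neighborFinset_eq_degree]
  have : (starGraphS m).neighborFinset (.inr i) = Finset.univ.map .inl := by
    ext (_ | _) <;> rw [mem_neighborFinset] <;> simp [starGraphS, Fin.fin_one_eq_zero]
  simp [this]

theorem starGraphS_boxProd_degree (u : (Fin 1 ⊕ Fin m) × (Fin 1 ⊕ Fin n))
    [Fintype ((starGraphS m □ starGraphS n).neighborSet u)] :
    (starGraphS m □ starGraphS n).degree u =
      (starGraphS m).degree u.1 + (starGraphS n).degree u.2 :=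
  degree_boxProd u

theorem starGraphS_boxProd_degree_inr_inr (i : Fin m) (j : Fin n)
    [Fintype ((starGraphS m □ starGraphS n).neighborSet (.inr i, .inr j))] :
    (starGraphS m □ starGraphS n).degree (.inr i, .inr j) = 2 := by
  simp [starGraphS_boxProd_degree, starGraphS_degree_inr]

theorem starGraphS_boxProd_degree_ne_two (hm : 2 ≤ m) (hn : 2 ≤ n)
    {u : (Fin 1 ⊕ Fin m) × (Fin 1 ⊕ Fin n)} (hu : u ∉ Set.range (Prod.map .inr .inr))
    [Fintype ((starGraphS m □ starGraphS n).neighborSet u)] :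
    (starGraphS m □ starGraphS n).degree u ≠ 2 := by
  obtain ⟨_ | i, _ | j⟩ := u
  all_goals simp only [starGraphS_boxProd_degree, starGraphS_degree_inl, starGraphS_degree_inr]
  · omega
  · omega
  · omega
  · exact absurd ⟨(i, j), rfl⟩ hu

theorem starGraphS_boxProd_isIndepSet_range :
    (starGraphS m □ starGraphS n).IsIndepSet (Set.range (Prod.map .inr .inr)) := by
  rintro _ ⟨⟨i, j⟩, rfl⟩ _ ⟨⟨i', j'⟩, rfl⟩ -
  simp [boxProd_adj, starGraphS]

theorem mul_le_deltaChrom_starGraphS_boxProd :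
    ((m * n : ℕ) : ℕ∞) ≤ deltaChrom (starGraphS m □ starGraphS n) := by
  have hclique := isClique_deltaComp_of_isIndepSet
    (starGraphS_boxProd_isIndepSet_range (m := m) (n := n)) <| by
      rintro _ ⟨⟨i, j⟩, rfl⟩ _ ⟨⟨i', j'⟩, rfl⟩
      simp only [Prod.map, starGraphS_boxProd_degree_inr_inr]
  refine le_chromaticNumber_of_pairwise_adj (by simp) (Prod.map .inr .inr) fun p q hpq => ?_
  exact hclique (Set.mem_range_self p) (Set.mem_range_self q)
    ((Sum.inr_injective.prodMap Sum.inr_injective).ne hpq)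

/-- The images of the `(c, j)` fill row `0` except `(0, 0)`, plus `(1, 0)`; those of the `(i, c)`
fill column `1` except `(0, 1)`, plus `(0, 0)`; the center goes to the free cell `(2, 0)`. -/
def starGraphS_boxProd_deltaColoring (hm : 3 ≤ m) (hn : 2 ≤ n) :
    (Fin 1 ⊕ Fin m) × (Fin 1 ⊕ Fin n) → Fin m × Fin n
  | (.inr i, .inr j) => (i, j)
  | (.inl _, .inr j) =>
    if h : j.1 + 1 < n then (⟨0, by omega⟩, ⟨j + 1, h⟩) else (⟨1, by omega⟩, ⟨0, by omega⟩)
  | (.inr i, .inl _) =>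
    if h : i.1 + 1 < m then (⟨i + 1, h⟩, ⟨1, hn⟩) else (⟨0, by omega⟩, ⟨0, by omega⟩)
  | (.inl _, .inl _) => (⟨2, hm⟩, ⟨0, by omega⟩)

theorem starGraphS_boxProd_deltaColoring_injOn_compl (hm : 3 ≤ m) (hn : 2 ≤ n) :
    (Set.range (Prod.map .inr .inr))ᶜ.InjOn (starGraphS_boxProd_deltaColoring hm hn) := by
  rintro ⟨_ | i, _ | j⟩ hu ⟨_ | i', _ | j'⟩ hv h
  all_goals
    simp only [starGraphS_boxProd_deltaColoring] at h
    try split_ifs at h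
    all_goals simp [Fin.ext_iff] at h hu hv ⊢ <;> omega

theorem starGraphS_boxProd_deltaColoring_ne_of_adj (hm : 3 ≤ m) (hn : 2 ≤ n)
    {u v : (Fin 1 ⊕ Fin m) × (Fin 1 ⊕ Fin n)} (hu : u ∈ Set.range (Prod.map .inr .inr))
    (huv : (starGraphS m □ starGraphS n).Adj u v) :
    starGraphS_boxProd_deltaColoring hm hn u ≠ starGraphS_boxProd_deltaColoring hm hn v := by
  obtain ⟨⟨i, j⟩, rfl⟩ := hu
  rcases v with ⟨_ | i', _ | j'⟩
  all_goals
    simp only [Prod.map, boxProd_adj, starGraphS, completeBipartiteGraph_adj] at huv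
    simp only [starGraphS_boxProd_deltaColoring]
    try split_ifs
    all_goals simp [Fin.ext_iff] at huv ⊢ <;> omega

theorem deltaChrom_starGraphS_boxProd_le (hm : 3 ≤ m) (hn : 2 ≤ n) :
    deltaChrom (starGraphS m □ starGraphS n) ≤ ((m * n : ℕ) : ℕ∞) := by
  have hinj : (Set.range (Prod.map .inr .inr)).InjOn (starGraphS_boxProd_deltaColoring hm hn) := by
    rintro _ ⟨⟨i, j⟩, rfl⟩ _ ⟨⟨i', j'⟩, rfl⟩ h
    simpa [starGraphS_boxProd_deltaColoring] using h
  have hvalid : ∀ {u v}, (deltaComp (starGraphS m □ starGraphS n)).Adj u v →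
      starGraphS_boxProd_deltaColoring hm hn u ≠ starGraphS_boxProd_deltaColoring hm hn v := by
    refine ne_of_deltaComp_adj ?_ hinj (starGraphS_boxProd_deltaColoring_injOn_compl hm hn)
      fun _ hu _ _ => starGraphS_boxProd_deltaColoring_ne_of_adj hm hn hu
    rintro _ ⟨⟨i, j⟩, rfl⟩ v hv
    rw [Prod.map, starGraphS_boxProd_degree_inr_inr]
    convert (starGraphS_boxProd_degree_ne_two (by omega) hn hv).symm
  simpa [deltaChrom] using (Coloring.mk _ hvalid).colorable.chromaticNumber_le

end Star

/-- For `m, n ≥ 3`, `χ_δ(S_{1,m} □ S_{1,n}) = mn`. -/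
theorem deltaChrom_star_boxProd_star (m n : ℕ) (hm : 3 ≤ m) (hn : 3 ≤ n) :
    deltaChrom (starGraphS m □ starGraphS n) = ((m * n : ℕ) : ℕ∞) :=
  (deltaChrom_starGraphS_boxProd_le hm (by omega)).antisymm mul_le_deltaChrom_starGraphS_boxProd
end

section
/- For m, n ≥ 3, the set of pairs of leaves {(i,j) : i a leaf of S_{1,m}, j a leaf of S_{1,n}} forms a clique of size mn in the δ-complement of S_{1,m} □ S_{1,n}. -/
open scoped Classical
open SimpleGraph

/-- The star `S_{1,m}` with one center and `m` leaves. -/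
def starGraph' (m : ℕ) : SimpleGraph (Fin 1 ⊕ Fin m) := completeBipartiteGraph (Fin 1) (Fin m)

namespace SimpleGraph

variable {α β : Type*}

theorem IsIndepSet.isClique_deltaComp [Fintype α] {G : SimpleGraph α} {s : Set α} {d : ℕ}
    (hs : G.IsIndepSet s) (hdeg : ∀ v ∈ s, G.degree v = d) : (deltaComp G).IsClique s :=
  fun u hu v hv huv => ⟨huv, Or.inl ⟨(hdeg u hu).trans (hdeg v hv).symm, hs hu hv huv⟩⟩

theorem IsIndepSet.boxProd {G : SimpleGraph α} {H : SimpleGraph β} {s : Set α} {t : Set β}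
    (hs : G.IsIndepSet s) (ht : H.IsIndepSet t) : (G □ H).IsIndepSet (s ×ˢ t) := by
  rintro x hx y hy - hxy
  rcases boxProd_adj.mp hxy with ⟨hadj, -⟩ | ⟨hadj, -⟩
  · exact hs hx.1 hy.1 hadj.ne hadj
  · exact ht hx.2 hy.2 hadj.ne hadj

theorem isIndepSet_completeBipartiteGraph_range_inr :
    (completeBipartiteGraph α β).IsIndepSet (Set.range Sum.inr) := by
  rintro _ ⟨i, rfl⟩ _ ⟨j, rfl⟩ -
  simp

theorem completeBipartiteGraph_degree_inr [Fintype α] (b : β)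
    [Fintype ((completeBipartiteGraph α β).neighborSet (Sum.inr b))] :
    (completeBipartiteGraph α β).degree (Sum.inr b) = Fintype.card α := by
  have hnbr : (completeBipartiteGraph α β).neighborSet (Sum.inr b) = Set.range Sum.inl := by
    ext (a | b') <;> simp
  rw [← card_neighborSet_eq_degree, ← Nat.card_eq_fintype_card, hnbr,
    Nat.card_range_of_injective Sum.inl_injective, Nat.card_eq_fintype_card]

end SimpleGraph

theorem leaves_isClique_deltaComp_star_boxProd_star_general (m n : ℕ) :
    (deltaComp (starGraph' m □ starGraph' n)).IsClique
        {p : (Fin 1 ⊕ Fin m) × (Fin 1 ⊕ Fin n) |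
          (∃ i, p.1 = Sum.inr i) ∧ (∃ j, p.2 = Sum.inr j)} ∧
      ({p : (Fin 1 ⊕ Fin m) × (Fin 1 ⊕ Fin n) |
          (∃ i, p.1 = Sum.inr i) ∧ (∃ j, p.2 = Sum.inr j)}).ncard = m * n := by
  have hleaves : {p : (Fin 1 ⊕ Fin m) × (Fin 1 ⊕ Fin n) |
      (∃ i, p.1 = Sum.inr i) ∧ (∃ j, p.2 = Sum.inr j)} =
        Set.range Sum.inr ×ˢ Set.range Sum.inr := by
    ext; simp [eq_comm]
  rw [hleaves]
  constructor
  · refine (isIndepSet_completeBipartiteGraph_range_inr.boxProd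
      isIndepSet_completeBipartiteGraph_range_inr).isClique_deltaComp (d := 2) ?_
    rintro ⟨_, _⟩ ⟨⟨i, rfl⟩, ⟨j, rfl⟩⟩
    rw [degree_boxProd]
    unfold starGraph'
    rw [completeBipartiteGraph_degree_inr, completeBipartiteGraph_degree_inr]
    simp
  · rw [Set.ncard_prod, Set.ncard_range_of_injective Sum.inr_injective,
      Set.ncard_range_of_injective Sum.inr_injective]
    simp

/-- For `m, n ≥ 3`, the pairs of leaves form a clique of size `mn` in
`(S_{1,m} □ S_{1,n})_δ`. -/
theorem leaves_isClique_deltaComp_star_boxProd_star (m n : ℕ) (hm : 3 ≤ m) (hn : 3 ≤ n) :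
    (deltaComp (starGraph' m □ starGraph' n)).IsClique
        {p : (Fin 1 ⊕ Fin m) × (Fin 1 ⊕ Fin n) |
          (∃ i, p.1 = Sum.inr i) ∧ (∃ j, p.2 = Sum.inr j)} ∧
      ({p : (Fin 1 ⊕ Fin m) × (Fin 1 ⊕ Fin n) |
          (∃ i, p.1 = Sum.inr i) ∧ (∃ j, p.2 = Sum.inr j)}).ncard = m * n :=
  leaves_isClique_deltaComp_star_boxProd_star_general m n
end
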